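/- arXiv:2512.08304 — 2 statements merged into one kernel-verified Lean document; each statement's English description precedes it below -/
import Mathlib

section
/- Let R be a unital (not necessarily commutative) ring and let c, d ∈ R. Then the Milnor matrix p_{c,d} is an idempotent in M₂(R): p_{c,d}² = p_{c,d}. -/
/-- The Milnor matrix `p_{c,d}` associated to two elements `c, d` of a unital ring. -/
def milnorMatrix {R : Type*} [Ring R] (c d : R) : Matrix (Fin 2) (Fin 2) R :=
  !![c * (2 - d * c) * d, c * (2 - d * c) * (1 - d * c);
     (1 - d * c) * d,     (1 - d * c) ^ 2]

/-- For any unital ring `R` and any `c, d ∈ R`, the Milnor matrix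
`p_{c,d}` is an idempotent in `M₂(R)`. -/
theorem milnorMatrix_idem {R : Type*} [Ring R] (c d : R) :
    milnorMatrix c d * milnorMatrix c d = milnorMatrix c d := by
  unfold milnorMatrix
  ext i j
  fin_cases i <;> fin_cases j <;>
    simp [Matrix.mul_apply, Fin.sum_univ_succ] <;> noncomm_ring
end

section
/- Let ρ₁ : B₁ → B₁₂ and ρ₂ : B₂ → B₁₂ be unital ring homomorphisms with ρ₂ surjective, and let B := {(b₁,b₂) ∈ B₁ × B₂ : ρ₁(b₁) = ρ₂(b₂)} be the pullback ring. Let a ∈ M_n(B₁₂) be an invertible matrix and let c, d ∈ M_n(B₂) satisfy (entrywise) ρ₂(c) = a and ρ₂(d) = a⁻¹. Let M := {(x,y) ∈ B₁ⁿ × B₂ⁿ : (entrywise ρ₁ of the row vector x)·a = entrywise ρ₂ of the row vector y}, a left B-module under componentwise multiplication. Let p_a ∈ M_{2n}(B) be the block matrix with entries in B₁ × B₂ given by p_a = [[(Iₙ, c(2−dc)d), (0, c(2−dc)(1−dc))], [(0, (1−dc)d), (0, (1−dc)²)]] (its entries lie in B because entrywise ρ₂ of c(2−dc)d is Iₙ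 and entrywise ρ₂ of the other three blocks is 0). Then M is isomorphic as a left B-module to B^{2n}·p_a = {v ∈ B^{2n} : v·p_a = v}, the image of right multiplication by the idempotent p_a; in particular M is a finitely generated projective left B-module. -/
open Matrix

section MilnorClutching

variable {B₁ B₂ B₁₂ : Type*} [Ring B₁] [Ring B₂] [Ring B₁₂]

/-- The pullback ring `B = {(b₁,b₂) ∈ B₁ × B₂ | ρ₁(b₁) = ρ₂(b₂)}`, as a subring of
`B₁ × B₂`. -/
def pullbackRing (ρ₁ : B₁ →+* B₁₂) (ρ₂ : B₂ →+* B₁₂) : Subring (B₁ × B₂) :=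
  RingHom.eqLocus (ρ₁.comp (RingHom.fst B₁ B₂)) (ρ₂.comp (RingHom.snd B₁ B₂))

private lemma vecMul_mul_left {R : Type*} [Ring R] {ι : Type*} [Fintype ι]
    (r : R) (w : ι → R) (M : Matrix ι ι R) :
    Matrix.vecMul (fun i => r * w i) M = fun j => r * Matrix.vecMul w M j := by
  funext j
  simp [Matrix.vecMul, dotProduct, Finset.mul_sum, mul_assoc]

/-- The left `B`-module `M = {(x,y) ∈ B₁ⁿ × B₂ⁿ | (ρ₁ x)·a = ρ₂ y}`, realized as a
submodule of `Fin n → (B₁ × B₂)` over the pullback ring. -/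
def clutchedModule (ρ₁ : B₁ →+* B₁₂) (ρ₂ : B₂ →+* B₁₂) {n : ℕ}
    (a : Matrix (Fin n) (Fin n) B₁₂) :
    Submodule ↥(pullbackRing ρ₁ ρ₂) (Fin n → B₁ × B₂) where
  carrier := {v | Matrix.vecMul (fun i => ρ₁ (v i).1) a = fun i => ρ₂ (v i).2}
  zero_mem' := by
    show Matrix.vecMul (fun i => ρ₁ ((0 : Fin _ → B₁ × B₂) i).1) a
      = fun i => ρ₂ ((0 : Fin _ → B₁ × B₂) i).2
    funext j
    simp [Matrix.vecMul, dotProduct]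
  add_mem' := by
    intro u v hu hv
    show Matrix.vecMul (fun i => ρ₁ ((u + v) i).1) a = fun i => ρ₂ ((u + v) i).2
    have h : (fun i => ρ₁ ((u + v) i).1)
        = (fun i => ρ₁ (u i).1) + fun i => ρ₁ (v i).1 := by
      funext i; simp
    rw [h, Matrix.add_vecMul, hu, hv]
    funext i; simp
  smul_mem' := by
    intro r v hv
    show Matrix.vecMul (fun i => ρ₁ ((r • v) i).1) a = fun i => ρ₂ ((r • v) i).2
    have hr : ρ₁ (r : B₁ × B₂).1 = ρ₂ (r : B₁ × B₂).2 := r.2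
    have h1 : (fun i => ρ₁ ((r • v) i).1)
        = fun i => ρ₁ (r : B₁ × B₂).1 * ρ₁ (v i).1 := by
      funext i
      show ρ₁ ((r : B₁ × B₂) * v i).1 = _
      simp
    rw [h1, vecMul_mul_left, hv]
    funext i
    show ρ₁ (r : B₁ × B₂).1 * ρ₂ (v i).2 = ρ₂ ((r : B₁ × B₂) * v i).2
    rw [hr]
    simp

/-- The submodule `B^{2n}·p = {v ∈ B^{2n} | v·p = v}` of vectors in the pullback ring
fixed by right multiplication with a matrix `p` whose two components are `q₁` (over `B₁`)
and `q₂` (over `B₂`). -/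
def fixedSubmodule (ρ₁ : B₁ →+* B₁₂) (ρ₂ : B₂ →+* B₁₂) {ι : Type*} [Fintype ι]
    (q₁ : Matrix ι ι B₁) (q₂ : Matrix ι ι B₂) :
    Submodule ↥(pullbackRing ρ₁ ρ₂) (ι → B₁ × B₂) where
  carrier := {v | (∀ i, ρ₁ (v i).1 = ρ₂ (v i).2) ∧
    Matrix.vecMul (fun i => (v i).1) q₁ = (fun i => (v i).1) ∧
    Matrix.vecMul (fun i => (v i).2) q₂ = fun i => (v i).2}
  zero_mem' := by
    refine ⟨by simp, ?_, ?_⟩ <;>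
      · funext j; simp [Matrix.vecMul, dotProduct]
  add_mem' := by
    rintro u v ⟨hu0, hu1, hu2⟩ ⟨hv0, hv1, hv2⟩
    refine ⟨fun i => by simp [hu0 i, hv0 i], ?_, ?_⟩
    · have h : (fun i => ((u + v) i).1) = (fun i => (u i).1) + fun i => (v i).1 := by
        funext i; simp
      rw [h, Matrix.add_vecMul, hu1, hv1]
    · have h : (fun i => ((u + v) i).2) = (fun i => (u i).2) + fun i => (v i).2 := by
        funext i; simp
      rw [h, Matrix.add_vecMul, hu2, hv2]
  smul_mem' := by
    rintro r v ⟨hv0, hv1, hv2⟩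
    have hr : ρ₁ (r : B₁ × B₂).1 = ρ₂ (r : B₁ × B₂).2 := r.2
    have h1 : ∀ i, ((r • v) i).1 = (r : B₁ × B₂).1 * (v i).1 := fun i => rfl
    have h2 : ∀ i, ((r • v) i).2 = (r : B₁ × B₂).2 * (v i).2 := fun i => rfl
    refine ⟨fun i => ?_, ?_, ?_⟩
    · rw [h1 i, h2 i, RingHom.map_mul, RingHom.map_mul, hv0 i, hr]
    · have h : (fun i => ((r • v) i).1) = fun i => (r : B₁ × B₂).1 * (v i).1 := by
        funext i; exact h1 i
      rw [h, vecMul_mul_left, hv1]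
    · have h : (fun i => ((r • v) i).2) = fun i => (r : B₁ × B₂).2 * (v i).2 := by
        funext i; exact h2 i
      rw [h, vecMul_mul_left, hv2]

/-!
Pair a `B₁`-matrix with a `B₂`-matrix to get a matrix over `B₁ × B₂`. Suppose `w₁ u₁ = 1` over
`B₁`, `w u = 1` over `B₂`, and the pairs are compatible with `a`: `ρ₂(u) = ρ₁(u₁) a` and
`a ρ₂(w) = ρ₁(w₁)`. Then right multiplication by `(w₁, w)` maps `M` onto the vectors of `B^κ`
fixed by the idempotent `(u₁ w₁, u w)`, with inverse right multiplication by `(u₁, u)`, and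
that image is a direct summand of `B^κ`. Milnor's `p_a` is `u w` for `u = [c(2 - dc); 1 - dc]`
and `w = [d, 1 - dc]`, where `w u = dc(2 - dc) + (1 - dc)² = 1` holds identically, while
`u₁ = [1; 0]`, `w₁ = [1, 0]`; compatibility then amounts to `ρ₂(c(2 - dc)) = a`,
`ρ₂(1 - dc) = 0` and `a a⁻¹ = 1`.
-/

section PairMatrix

variable {ι κ : Type*}

def pairMatrix (m₁ : Matrix ι κ B₁) (m₂ : Matrix ι κ B₂) : Matrix ι κ (B₁ × B₂) :=
  Matrix.of fun i j => (m₁ i j, m₂ i j)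

@[simp]
lemma fst_vecMul_pairMatrix [Fintype ι] (v : ι → B₁ × B₂) (m₁ : Matrix ι κ B₁)
    (m₂ : Matrix ι κ B₂) (j : κ) :
    ((v ᵥ* pairMatrix m₁ m₂) j).1 = ((fun i => (v i).1) ᵥ* m₁) j := by
  simp [vecMul, dotProduct, pairMatrix, Prod.fst_sum]

@[simp]
lemma snd_vecMul_pairMatrix [Fintype ι] (v : ι → B₁ × B₂) (m₁ : Matrix ι κ B₁)
    (m₂ : Matrix ι κ B₂) (j : κ) :
    ((v ᵥ* pairMatrix m₁ m₂) j).2 = ((fun i => (v i).2) ᵥ* m₂) j := by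
  simp [vecMul, dotProduct, pairMatrix, Prod.snd_sum]

lemma pairMatrix_mul {μ : Type*} [Fintype κ] (m₁ : Matrix ι κ B₁) (m₂ : Matrix ι κ B₂)
    (n₁ : Matrix κ μ B₁) (n₂ : Matrix κ μ B₂) :
    pairMatrix m₁ m₂ * pairMatrix n₁ n₂ = pairMatrix (m₁ * n₁) (m₂ * n₂) := by
  ext i j <;> simp [mul_apply, pairMatrix, Prod.fst_sum, Prod.snd_sum]

lemma pairMatrix_one [DecidableEq ι] :
    pairMatrix (1 : Matrix ι ι B₁) (1 : Matrix ι ι B₂) = 1 := by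
  ext i j <;> by_cases h : i = j <;> simp [pairMatrix, one_apply, h]

end PairMatrix

lemma RingHom.comp_vecMul {R S : Type*} [Ring R] [Ring S] (f : R →+* S) {ι κ : Type*}
    [Fintype ι] (x : ι → R) (m : Matrix ι κ R) :
    (fun j => f ((x ᵥ* m) j)) = (fun i => f (x i)) ᵥ* m.map f :=
  funext (f.map_vecMul m x)

def IsClutched (ρ₁ : B₁ →+* B₁₂) (ρ₂ : B₂ →+* B₁₂) {ι : Type*} [Fintype ι]
    (a : Matrix ι ι B₁₂) (v : ι → B₁ × B₂) : Prop :=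
  (fun i => ρ₁ (v i).1) ᵥ* a = fun i => ρ₂ (v i).2

section Clutching

variable {ρ₁ : B₁ →+* B₁₂} {ρ₂ : B₂ →+* B₁₂} {ι κ : Type*} [Fintype ι]

lemma IsClutched.vecMul_pairMatrix [Fintype κ] {a : Matrix ι ι B₁₂} {b : Matrix κ κ B₁₂}
    {v : ι → B₁ × B₂} (hv : IsClutched ρ₁ ρ₂ a v) {m₁ : Matrix ι κ B₁} {m₂ : Matrix ι κ B₂}
    (h : a * m₂.map ρ₂ = m₁.map ρ₁ * b) : IsClutched ρ₁ ρ₂ b (v ᵥ* pairMatrix m₁ m₂) := by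
  unfold IsClutched at hv ⊢
  simp only [fst_vecMul_pairMatrix, snd_vecMul_pairMatrix, RingHom.comp_vecMul]
  rw [vecMul_vecMul, ← h, ← vecMul_vecMul, hv]

lemma isClutched_one_iff [DecidableEq ι] {v : ι → B₁ × B₂} :
    IsClutched ρ₁ ρ₂ 1 v ↔ ∀ i, v i ∈ pullbackRing ρ₁ ρ₂ := by
  rw [IsClutched, vecMul_one, funext_iff]
  rfl

lemma mem_clutchedModule {n : ℕ} {a : Matrix (Fin n) (Fin n) B₁₂} {v : Fin n → B₁ × B₂} :
    v ∈ clutchedModule ρ₁ ρ₂ a ↔ IsClutched ρ₁ ρ₂ a v :=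
  Iff.rfl

lemma mem_fixedSubmodule [DecidableEq ι] {q₁ : Matrix ι ι B₁} {q₂ : Matrix ι ι B₂}
    {v : ι → B₁ × B₂} :
    v ∈ fixedSubmodule ρ₁ ρ₂ q₁ q₂ ↔ IsClutched ρ₁ ρ₂ 1 v ∧ v ᵥ* pairMatrix q₁ q₂ = v := by
  simp only [fixedSubmodule, Submodule.mem_mk, AddSubmonoid.mem_mk, AddSubsemigroup.mem_mk,
    Set.mem_ofPred_eq, IsClutched, vecMul_one, funext_iff, Prod.ext_iff, fst_vecMul_pairMatrix,
    snd_vecMul_pairMatrix, forall_and]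

end Clutching

section Pullback

variable (ρ₁ : B₁ →+* B₁₂) (ρ₂ : B₂ →+* B₁₂)

def vecMulLinearPullback {ι κ : Type*} [Fintype ι] (P : Matrix ι κ (B₁ × B₂)) :
    (ι → B₁ × B₂) →ₗ[pullbackRing ρ₁ ρ₂] (κ → B₁ × B₂) where
  toFun v := v ᵥ* P
  map_add' := add_vecMul P
  map_smul' r v := smul_vecMul (r : B₁ × B₂) v P

@[simp]
lemma vecMulLinearPullback_apply {ι κ : Type*} [Fintype ι] (P : Matrix ι κ (B₁ × B₂))
    (v : ι → B₁ × B₂) : vecMulLinearPullback ρ₁ ρ₂ P v = v ᵥ* P := rfl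

variable {ρ₁ ρ₂} {κ : Type*} {n : ℕ} {a : Matrix (Fin n) (Fin n) B₁₂}
  {u₁ : Matrix κ (Fin n) B₁} {w₁ : Matrix (Fin n) κ B₁}
  {u : Matrix κ (Fin n) B₂} {w : Matrix (Fin n) κ B₂}

lemma map_mul_eq_map_mul_of_clutch (hu : u.map ρ₂ = u₁.map ρ₁ * a)
    (hw : a * w.map ρ₂ = w₁.map ρ₁) :
    (u₁ * w₁).map ρ₁ = (u * w).map ρ₂ := by
  rw [Matrix.map_mul, Matrix.map_mul, hu, Matrix.mul_assoc, hw]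

def clutchedModuleEquiv [Fintype κ] [DecidableEq κ] (hwu₁ : w₁ * u₁ = 1) (hwu : w * u = 1)
    (hu : u.map ρ₂ = u₁.map ρ₁ * a) (hw : a * w.map ρ₂ = w₁.map ρ₁) :
    clutchedModule ρ₁ ρ₂ a ≃ₗ[pullbackRing ρ₁ ρ₂] fixedSubmodule ρ₁ ρ₂ (u₁ * w₁) (u * w) :=
  have hWU : pairMatrix w₁ w * pairMatrix u₁ u = 1 := by
    rw [pairMatrix_mul, hwu₁, hwu, pairMatrix_one]
  { (vecMulLinearPullback ρ₁ ρ₂ (pairMatrix w₁ w)).restrict fun v hv => by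
      refine mem_fixedSubmodule.2
        ⟨(mem_clutchedModule.1 hv).vecMul_pairMatrix (by rw [hw, Matrix.mul_one]), ?_⟩
      rw [← pairMatrix_mul, vecMulLinearPullback_apply, vecMul_vecMul, ← Matrix.mul_assoc, hWU,
        Matrix.one_mul] with
    invFun x := ⟨x.1 ᵥ* pairMatrix u₁ u,
      (mem_fixedSubmodule.1 x.2).1.vecMul_pairMatrix (by rw [hu, Matrix.one_mul])⟩
    left_inv v := Subtype.ext <| by
      change v.1 ᵥ* pairMatrix w₁ w ᵥ* pairMatrix u₁ u = v.1
      rw [vecMul_vecMul, hWU, vecMul_one]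
    right_inv x := Subtype.ext <| by
      change x.1 ᵥ* pairMatrix u₁ u ᵥ* pairMatrix w₁ w = x.1
      rw [vecMul_vecMul, pairMatrix_mul]
      exact (mem_fixedSubmodule.1 x.2).2 }

end Pullback

section Projective

variable {ρ₁ : B₁ →+* B₁₂} {ρ₂ : B₂ →+* B₁₂} {ι : Type*} [Fintype ι] [DecidableEq ι]
  {q₁ : Matrix ι ι B₁} {q₂ : Matrix ι ι B₂}

lemma exists_split_fixedSubmodule (hq₁ : IsIdempotentElem q₁) (hq₂ : IsIdempotentElem q₂)
    (hq : q₁.map ρ₁ = q₂.map ρ₂) :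
    ∃ (i : fixedSubmodule ρ₁ ρ₂ q₁ q₂ →ₗ[pullbackRing ρ₁ ρ₂] (ι → pullbackRing ρ₁ ρ₂))
      (r : (ι → pullbackRing ρ₁ ρ₂) →ₗ[pullbackRing ρ₁ ρ₂] fixedSubmodule ρ₁ ρ₂ q₁ q₂),
      r ∘ₗ i = LinearMap.id := by
  have hQ : pairMatrix q₁ q₂ * pairMatrix q₁ q₂ = pairMatrix q₁ q₂ := by
    rw [pairMatrix_mul, hq₁.eq, hq₂.eq]
  let coe : (ι → pullbackRing ρ₁ ρ₂) →ₗ[pullbackRing ρ₁ ρ₂] (ι → B₁ × B₂) :=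
    { toFun u i := u i
      map_add' _ _ := rfl
      map_smul' _ _ := rfl }
  let i : fixedSubmodule ρ₁ ρ₂ q₁ q₂ →ₗ[pullbackRing ρ₁ ρ₂] (ι → pullbackRing ρ₁ ρ₂) :=
    { toFun x j := ⟨x.1 j, isClutched_one_iff.1 (mem_fixedSubmodule.1 x.2).1 j⟩
      map_add' _ _ := rfl
      map_smul' _ _ := rfl }
  refine ⟨i, ((vecMulLinearPullback ρ₁ ρ₂ (pairMatrix q₁ q₂)).comp coe).codRestrict _
    fun u => mem_fixedSubmodule.2 ⟨?_, ?_⟩, LinearMap.ext fun x => Subtype.ext ?_⟩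
  · exact (isClutched_one_iff.2 fun j => (u j).2).vecMul_pairMatrix
      (by rw [Matrix.one_mul, Matrix.mul_one, hq])
  · simp only [LinearMap.comp_apply, vecMulLinearPullback_apply, vecMul_vecMul, hQ]
  · exact (mem_fixedSubmodule.1 x.2).2

lemma fixedSubmodule_finite_projective (hq₁ : IsIdempotentElem q₁) (hq₂ : IsIdempotentElem q₂)
    (hq : q₁.map ρ₁ = q₂.map ρ₂) :
    Module.Finite (pullbackRing ρ₁ ρ₂) (fixedSubmodule ρ₁ ρ₂ q₁ q₂) ∧
      Module.Projective (pullbackRing ρ₁ ρ₂) (fixedSubmodule ρ₁ ρ₂ q₁ q₂) := by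
  obtain ⟨i, r, hri⟩ := exists_split_fixedSubmodule hq₁ hq₂ hq
  exact ⟨Module.Finite.of_surjective r fun x => ⟨i x, LinearMap.congr_fun hri x⟩,
    Module.Projective.of_split i r hri⟩

end Projective

lemma Matrix.isIdempotentElem_mul_of_mul_eq_one {R : Type*} [Semiring R] {m k : Type*}
    [Fintype m] [Fintype k] [DecidableEq m] {u : Matrix k m R} {w : Matrix m k R}
    (h : w * u = 1) : IsIdempotentElem (u * w) := by
  rw [IsIdempotentElem, Matrix.mul_assoc, ← Matrix.mul_assoc w, h, Matrix.one_mul]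

section MilnorMatrices

variable {R : Type*} [Ring R] {m : Type*} [Fintype m] [DecidableEq m]

/-- The left columns of Milnor's invertible lift `[[c(2 - dc), cd - 1], [1 - dc, d]]` of
`diag(a, a⁻¹)`. -/
def milnorRows (c d : Matrix m m R) : Matrix (m ⊕ m) m R :=
  fromRows (c * (2 - d * c)) (1 - d * c)

/-- The top rows of the inverse `[[d, 1 - dc], [cd - 1, c(2 - dc)]]` of Milnor's lift. -/
def milnorCols (c d : Matrix m m R) : Matrix m (m ⊕ m) R :=
  fromCols d (1 - d * c)

lemma milnorCols_mul_milnorRows (c d : Matrix m m R) : milnorCols c d * milnorRows c d = 1 := by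
  rw [milnorCols, milnorRows, fromCols_mul_fromRows]
  noncomm_ring

lemma milnorRows_mul_milnorCols (c d : Matrix m m R) :
    milnorRows c d * milnorCols c d = fromBlocks (c * (2 - d * c) * d)
      (c * (2 - d * c) * (1 - d * c)) ((1 - d * c) * d) ((1 - d * c) ^ 2) := by
  rw [milnorRows, milnorCols, fromRows_mul_fromCols, sq]

variable {S : Type*} [Ring S] (f : R →+* S) {c d : Matrix m m R}

lemma map_milnorRows (h : d.map f * c.map f = 1) :
    (milnorRows c d).map f = fromRows (c.map f) 0 := by
  rw [milnorRows, fromRows_map]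
  simp only [← f.mapMatrix_apply, map_mul, map_sub, map_one, map_ofNat]
  simp only [RingHom.mapMatrix_apply, h]
  noncomm_ring

lemma map_milnorCols (h : d.map f * c.map f = 1) :
    (milnorCols c d).map f = fromCols (d.map f) 0 := by
  rw [milnorCols, fromCols_map]
  simp only [← f.mapMatrix_apply, map_mul, map_sub, map_one]
  simp only [RingHom.mapMatrix_apply, h, sub_self]

end MilnorMatrices

theorem milnor_clutching_module_iso_general {n : ℕ}
    (ρ₁ : B₁ →+* B₁₂) (ρ₂ : B₂ →+* B₁₂)
    (a a' : Matrix (Fin n) (Fin n) B₁₂) (haa' : a * a' = 1) (ha'a : a' * a = 1)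
    (c d : Matrix (Fin n) (Fin n) B₂) (hc : c.map ρ₂ = a) (hd : d.map ρ₂ = a') :
    (∀ i j, ρ₁ ((Matrix.fromBlocks (1 : Matrix (Fin n) (Fin n) B₁) 0 0 0) i j) =
        ρ₂ ((Matrix.fromBlocks (c * (2 - d * c) * d) (c * (2 - d * c) * (1 - d * c))
          ((1 - d * c) * d) ((1 - d * c) ^ 2)) i j)) ∧
    Nonempty (clutchedModule ρ₁ ρ₂ a ≃ₗ[↥(pullbackRing ρ₁ ρ₂)]
      fixedSubmodule ρ₁ ρ₂ (Matrix.fromBlocks (1 : Matrix (Fin n) (Fin n) B₁) 0 0 0)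
        (Matrix.fromBlocks (c * (2 - d * c) * d) (c * (2 - d * c) * (1 - d * c))
          ((1 - d * c) * d) ((1 - d * c) ^ 2))) ∧
    Module.Finite ↥(pullbackRing ρ₁ ρ₂) (clutchedModule ρ₁ ρ₂ a) ∧
    Module.Projective ↥(pullbackRing ρ₁ ρ₂) (clutchedModule ρ₁ ρ₂ a) := by
  set u₁ : Matrix (Fin n ⊕ Fin n) (Fin n) B₁ := fromRows 1 0
  set w₁ : Matrix (Fin n) (Fin n ⊕ Fin n) B₁ := fromCols 1 0
  have hwu₁ : w₁ * u₁ = 1 := by simp [u₁, w₁, fromCols_mul_fromRows]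
  have hu₁w₁ : u₁ * w₁ = fromBlocks 1 0 0 0 := by
    rw [fromRows_mul_fromCols]; simp
  have hdc : d.map ρ₂ * c.map ρ₂ = 1 := by rw [hc, hd, ha'a]
  have hu : (milnorRows c d).map ρ₂ = u₁.map ρ₁ * a := by
    simp [u₁, map_milnorRows ρ₂ hdc, fromRows_map, fromRows_mul, hc]
  have hw : a * (milnorCols c d).map ρ₂ = w₁.map ρ₁ := by
    simp [w₁, map_milnorCols ρ₂ hdc, fromCols_map, mul_fromCols, hd, haa']
  have hmap := map_mul_eq_map_mul_of_clutch hu hw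
  rw [← hu₁w₁, ← milnorRows_mul_milnorCols]
  let e := clutchedModuleEquiv hwu₁ (milnorCols_mul_milnorRows c d) hu hw
  obtain ⟨_, _⟩ := fixedSubmodule_finite_projective (isIdempotentElem_mul_of_mul_eq_one hwu₁)
    (isIdempotentElem_mul_of_mul_eq_one (milnorCols_mul_milnorRows c d)) hmap
  exact ⟨fun i j => congrFun₂ hmap i j, ⟨e⟩, Module.Finite.equiv e.symm,
    Module.Projective.of_equiv e.symm⟩

/-- **Statement 3 (Milnor clutching).** Let `ρ₁ : B₁ → B₁₂` and `ρ₂ : B₂ → B₁₂` be unital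
ring homomorphisms with `ρ₂` surjective, `B` the pullback ring, `a ∈ Mₙ(B₁₂)` invertible
with inverse `a'`, and `c, d ∈ Mₙ(B₂)` entrywise lifts of `a` and `a⁻¹` along `ρ₂`.
Form the Milnor block matrix
`p_a = [[(Iₙ, c(2−dc)d), (0, c(2−dc)(1−dc))], [(0, (1−dc)d), (0, (1−dc)²)]]`.
Then its entries lie in `B`, and the module
`M = {(x,y) ∈ B₁ⁿ × B₂ⁿ | (ρ₁ x)·a = ρ₂ y}` is isomorphic as a left `B`-module to
`B^{2n}·p_a = {v ∈ B^{2n} | v·p_a = v}`; in particular, `M` is a finitely generated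
projective left `B`-module. -/
theorem milnor_clutching_module_iso {n : ℕ}
    (ρ₁ : B₁ →+* B₁₂) (ρ₂ : B₂ →+* B₁₂) (hρ₂ : Function.Surjective ρ₂)
    (a a' : Matrix (Fin n) (Fin n) B₁₂) (haa' : a * a' = 1) (ha'a : a' * a = 1)
    (c d : Matrix (Fin n) (Fin n) B₂) (hc : c.map ρ₂ = a) (hd : d.map ρ₂ = a') :
    (∀ i j, ρ₁ ((Matrix.fromBlocks (1 : Matrix (Fin n) (Fin n) B₁) 0 0 0) i j) =
        ρ₂ ((Matrix.fromBlocks (c * (2 - d * c) * d) (c * (2 - d * c) * (1 - d * c))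
          ((1 - d * c) * d) ((1 - d * c) ^ 2)) i j)) ∧
    Nonempty (clutchedModule ρ₁ ρ₂ a ≃ₗ[↥(pullbackRing ρ₁ ρ₂)]
      fixedSubmodule ρ₁ ρ₂ (Matrix.fromBlocks (1 : Matrix (Fin n) (Fin n) B₁) 0 0 0)
        (Matrix.fromBlocks (c * (2 - d * c) * d) (c * (2 - d * c) * (1 - d * c))
          ((1 - d * c) * d) ((1 - d * c) ^ 2))) ∧
    Module.Finite ↥(pullbackRing ρ₁ ρ₂) (clutchedModule ρ₁ ρ₂ a) ∧
    Module.Projective ↥(pullbackRing ρ₁ ρ₂) (clutchedModule ρ₁ ρ₂ a) :=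
  milnor_clutching_module_iso_general ρ₁ ρ₂ a a' haa' ha'a c d hc hd

end MilnorClutching
end
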